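/- arXiv:2409.10119 — 3 statements merged into one kernel-verified Lean document; each statement's English description precedes it below -/
import Mathlib

section
/- The Cholesky whitening process is scale stable: if X is a random vector with positive definite covariance Σ, L is the Cholesky factor with Σ⁻¹ = LᵀL (L lower triangular, positive diagonal), and Q is a diagonal matrix with positive entries, then the Cholesky whitening matrix L_Q of QX satisfies L_Q(QX) = LX almost surely. -/
open Matrix MeasureTheory

lemma cholesky_unique {n : Type*} [Fintype n] [DecidableEq n] [LinearOrder n]
    (A B : Matrix n n ℝ)
    (hAtri : ∀ i j, i < j → A i j = 0) (hAdiag : ∀ i, 0 < A i i)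
    (hBtri : ∀ i j, i < j → B i j = 0) (hBdiag : ∀ i, 0 < B i i)
    (h : Aᵀ * A = Bᵀ * B) : A = B := by
  have hAlt : A.BlockTriangular OrderDual.toDual := fun i j hij => hAtri i j hij
  have hBlt : B.BlockTriangular OrderDual.toDual := fun i j hij => hBtri i j hij
  have hAdet : A.det ≠ 0 := by
    rw [det_of_lowerTriangular A hAlt]
    exact (Finset.prod_pos fun i _ => hAdiag i).ne'
  have hBdet : B.det ≠ 0 := by
    rw [det_of_lowerTriangular B hBlt]
    exact (Finset.prod_pos fun i _ => hBdiag i).ne'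
  haveI := A.invertibleOfIsUnitDet hAdet.isUnit
  haveI := B.invertibleOfIsUnitDet hBdet.isUnit
  set C := B * A⁻¹ with hC
  have hClow : C.BlockTriangular OrderDual.toDual :=
    hBlt.mul (blockTriangular_inv_of_blockTriangular hAlt)
  have hCTB : Cᵀ * B = A := by
    rw [hC, transpose_mul, mul_assoc, ← h, ← mul_assoc, transpose_nonsing_inv,
      Matrix.nonsing_inv_mul _ (by simpa using hAdet.isUnit), Matrix.one_mul]
  have hCT : Cᵀ = A * B⁻¹ := by
    rw [← hCTB, mul_assoc, Matrix.mul_nonsing_inv _ hBdet.isUnit, Matrix.mul_one]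
  have hCTlow : (Cᵀ).BlockTriangular OrderDual.toDual := by
    rw [hCT]
    exact hAlt.mul (blockTriangular_inv_of_blockTriangular hBlt)
  have hCoff : ∀ i j, i ≠ j → C i j = 0 := by
    intro i j hij
    rcases lt_or_gt_of_ne hij with h1 | h1
    · exact hClow h1
    · exact hCTlow h1
  have hCA : C * A = B := by
    rw [hC, mul_assoc, Matrix.nonsing_inv_mul _ hAdet.isUnit, Matrix.mul_one]
  have hCC : Cᵀ * C = 1 := by
    rw [hCT, hC, mul_assoc, ← mul_assoc B⁻¹, Matrix.nonsing_inv_mul _ hBdet.isUnit,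
      Matrix.one_mul, Matrix.mul_nonsing_inv _ hAdet.isUnit]
  have hCpos : ∀ i, 0 < C i i := by
    intro i
    have hBii : B i i = C i i * A i i := by
      rw [← hCA, mul_apply]
      rw [Finset.sum_eq_single i]
      · intro k _ hk
        rw [hCoff i k (Ne.symm hk), zero_mul]
      · intro hk; exact absurd (Finset.mem_univ i) hk
    have h2 : 0 < C i i * A i i := hBii ▸ hBdiag i
    rcases mul_pos_iff.mp h2 with h3 | h3
    · exact h3.1
    · exact absurd (hAdiag i) (asymm h3.2)
  have hCone : C = 1 := by
    ext i j
    by_cases hij : i = j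
    · subst hij
      have h1 : (Cᵀ * C) i i = 1 := by rw [hCC, Matrix.one_apply_eq]
      rw [mul_apply] at h1
      rw [Finset.sum_eq_single i] at h1
      · simp only [transpose_apply] at h1
        rcases mul_self_eq_one_iff.mp h1 with h2 | h2
        · simpa using h2
        · linarith [hCpos i]
      · intro k _ hk
        rw [transpose_apply, hCoff k i hk, zero_mul]
      · intro hk; exact absurd (Finset.mem_univ i) hk
    · rw [hCoff i j hij, Matrix.one_apply_ne hij]
  rw [← hCA, hCone, Matrix.one_mul]

/-- Scale stability of the Cholesky whitening process: if `X` has positive definite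
covariance `Σ`, `L` is the Cholesky whitening matrix of `X` (lower triangular,
positive diagonal, `Lᵀ L = Σ⁻¹`) and `L_Q` is the Cholesky whitening matrix of
`Q X` (where `Q = diagonal q`, `q i > 0`), then `L_Q (Q X) = L X` almost surely. -/
theorem cholesky_whitening_scale_stable (n : Type*) [Fintype n] [DecidableEq n]
    [LinearOrder n]
    {Ω : Type*} [MeasurableSpace Ω] (μ : Measure Ω) (X : Ω → n → ℝ)
    (S L LQ : Matrix n n ℝ) (hS : S.PosDef)
    (q : n → ℝ) (hq : ∀ i, 0 < q i)
    (hLtri : ∀ i j, i < j → L i j = 0) (hLdiag : ∀ i, 0 < L i i)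
    (hL : Lᵀ * L = S⁻¹)
    (hLQtri : ∀ i j, i < j → LQ i j = 0) (hLQdiag : ∀ i, 0 < LQ i i)
    (hLQ : LQᵀ * LQ = (Matrix.diagonal q * S * Matrix.diagonal q)⁻¹) :
    ∀ᵐ ω ∂μ, LQ.mulVec ((Matrix.diagonal q).mulVec (X ω)) = L.mulVec (X ω) := by
  set D : Matrix n n ℝ := Matrix.diagonal q with hD
  have hDdet : D.det ≠ 0 := by
    rw [hD, det_diagonal]
    exact (Finset.prod_pos fun i _ => hq i).ne'
  have hDD : D * D⁻¹ = 1 := Matrix.mul_nonsing_inv _ hDdet.isUnit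
  have hDD' : D⁻¹ * D = 1 := Matrix.nonsing_inv_mul _ hDdet.isUnit
  have hgram : (LQ * D)ᵀ * (LQ * D) = S⁻¹ := by
    rw [transpose_mul, mul_assoc, ← mul_assoc LQᵀ, hLQ, Matrix.mul_inv_rev,
      Matrix.mul_inv_rev]
    have hDT : Dᵀ = D := by rw [hD, diagonal_transpose]
    rw [hDT, ← mul_assoc, ← mul_assoc, hDD, Matrix.one_mul, mul_assoc, hDD',
      Matrix.mul_one]
  have hkey : LQ * D = L := by
    refine cholesky_unique (LQ * D) L ?_ ?_ hLtri hLdiag ?_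
    · intro i j hij
      simp [hD, Matrix.mul_diagonal, hLQtri i j hij]
    · intro i
      have : (LQ * D) i i = LQ i i * q i := by simp [hD, Matrix.mul_diagonal]
      rw [this]
      exact mul_pos (hLQdiag i) (hq i)
    · rw [hgram, hL]
  filter_upwards with ω
  rw [Matrix.mulVec_mulVec, hkey]
end

section
/- The ZCA-cor whitening process is scale stable: with P the correlation matrix of X, V the diagonal matrix of variances, and W = P^{-1/2}V^{-1/2} for any fixed square root P^{-1/2} of P⁻¹, if Q is a diagonal matrix with positive entries and W_Q = P^{-1/2}V_Q^{-1/2} is the ZCA-cor whitening matrix of QX (where V_Q = QVQ), then W_Q(QX) = WX. -/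
open Matrix MeasureTheory

/-- Scale stability of ZCA-cor whitening: let `X` have variances `v i > 0`, correlation
matrix `P`, and let `R` be a fixed square root of `P⁻¹` (`Rᵀ R = P⁻¹`). With
`W = R V^{-1/2}` and, for `Q = diagonal q` (`q i > 0`), `W_Q = R V_Q^{-1/2}` where
`V_Q = Q V Q`, we have `W_Q (Q X) = W X`. -/
theorem ZCAcor_whitening_scale_stable (n : Type*) [Fintype n] [DecidableEq n]
    {Ω : Type*} [MeasurableSpace Ω] (μ : Measure Ω) (X : Ω → n → ℝ)
    (P R : Matrix n n ℝ) (hR : Rᵀ * R = P⁻¹)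
    (v : n → ℝ) (hv : ∀ i, 0 < v i)
    (q : n → ℝ) (hq : ∀ i, 0 < q i) :
    ∀ᵐ ω ∂μ,
      (R * Matrix.diagonal (fun i => ((q i) ^ 2 * v i) ^ (-(1/2) : ℝ))).mulVec
          ((Matrix.diagonal q).mulVec (X ω)) =
      (R * Matrix.diagonal (fun i => (v i) ^ (-(1/2) : ℝ))).mulVec (X ω) := by
  apply Filter.Eventually.of_forall
  intro ω
  rw [Matrix.mulVec_mulVec, Matrix.mul_assoc, Matrix.diagonal_mul_diagonal]
  have key : (fun i => ((q i) ^ 2 * v i) ^ (-(1/2) : ℝ) * q i)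
      = fun i => (v i) ^ (-(1/2) : ℝ) := by
    funext i
    have hqi := hq i
    have hvi := hv i
    have h1 : ((q i) ^ 2 * v i) ^ (-(1/2) : ℝ)
        = ((q i) ^ 2 : ℝ) ^ (-(1/2) : ℝ) * (v i) ^ (-(1/2) : ℝ) :=
      Real.mul_rpow (by positivity) hvi.le
    have h2 : ((q i) ^ 2 : ℝ) ^ (-(1/2) : ℝ) = (q i)⁻¹ := by
      rw [← Real.rpow_natCast (q i) 2, ← Real.rpow_mul hqi.le]
      norm_num
      exact Real.rpow_neg_one (q i)
    rw [h1, h2]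
    field_simp
  rw [key]
end

section
/- Rising tide property: if X is a random vector with mean m and whitening matrix W such that W maps the nonnegative orthant into itself and (Wm)ᵢ ≥ 0 for all i, then for every vector c with nonnegative components, G₁(X + c) ≤ G₁(X), where X and X+c share the same whitening matrix W (they have the same covariance). -/
open Matrix MeasureTheory

/-- The multivariate `ℓ₁` Gini index of a law `ν` on `ℝⁿ`, relative to the whitening
matrix `W`: `G₁(ν) = (1/(2 ∑ᵢ |(W E[Y])ᵢ|)) ∬ ∑ᵢ |(W(x−y))ᵢ| dν dν`. -/
noncomputable def giniL1 {n : Type*} [Fintype n] (W : Matrix n n ℝ)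
    (ν : Measure (n → ℝ)) : ℝ :=
  (1 / (2 * ∑ i, |W.mulVec (fun i => ∫ x, x i ∂ν) i|)) *
    ∫ p : (n → ℝ) × (n → ℝ), ∑ i, |W.mulVec (p.1 - p.2) i| ∂(ν.prod ν)

/-- Rising tide property: if `W` maps the nonnegative orthant into itself,
`(W m)ᵢ ≥ 0` for all `i` with `∑ᵢ (W m)ᵢ > 0`, and `c` is a nonnegative vector, then
`G₁(X + c) ≤ G₁(X)` (where `X + c` has the same covariance, hence the same `W`). -/
theorem gini_l1_rising_tide (n : Type*) [Fintype n]
    (μ : Measure (n → ℝ)) [IsProbabilityMeasure μ]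
    (W : Matrix n n ℝ)
    (hW : ∀ x : n → ℝ, (∀ i, 0 ≤ x i) → ∀ i, 0 ≤ W.mulVec x i)
    (hint : ∀ i, Integrable (fun x : n → ℝ => x i) μ)
    (hm : ∀ i, 0 ≤ W.mulVec (fun i => ∫ x, x i ∂μ) i)
    (hmpos : 0 < ∑ i, W.mulVec (fun i => ∫ x, x i ∂μ) i)
    (c : n → ℝ) (hc : ∀ i, 0 ≤ c i) :
    giniL1 W (μ.map (fun x => x + c)) ≤ giniL1 W μ := by
  classical
  set m : n → ℝ := fun i => ∫ x, x i ∂μ with hm_def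
  have hf : Measurable (fun x : n → ℝ => x + c) := measurable_id.add_const c
  -- the mean of the shifted measure
  have hmean : (fun i => ∫ x, x i ∂(μ.map (fun x => x + c))) = m + c := by
    funext i
    rw [integral_map hf.aemeasurable (measurable_pi_apply i).aestronglyMeasurable]
    simp only [Pi.add_apply]
    rw [integral_add (hint i) (integrable_const _)]
    simp [m]
  -- measurability of the integrand
  have hG : Measurable (fun p : (n → ℝ) × (n → ℝ) => ∑ i, |W.mulVec (p.1 - p.2) i|) := by
    apply Finset.measurable_sum
    intro i _
    apply Measurable.abs
    simp only [mulVec, dotProduct]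
    apply Finset.measurable_sum
    intro j _
    exact measurable_const.mul
      ((measurable_pi_apply j).comp measurable_fst |>.sub
        ((measurable_pi_apply j).comp measurable_snd))
  -- the double integral is unchanged by the shift
  have hInt : (∫ p : (n → ℝ) × (n → ℝ), ∑ i, |W.mulVec (p.1 - p.2) i|
      ∂((μ.map (fun x => x + c)).prod (μ.map (fun x => x + c))))
      = ∫ p : (n → ℝ) × (n → ℝ), ∑ i, |W.mulVec (p.1 - p.2) i| ∂(μ.prod μ) := by
    rw [Measure.map_prod_map _ _ hf hf,
      integral_map (hf.prodMap hf).aemeasurable hG.aestronglyMeasurable]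
    congr 1
    funext p
    simp [Prod.map]
  -- denominators
  have hWc : ∀ i, 0 ≤ W.mulVec c i := hW c hc
  have hA : (∑ i, |W.mulVec m i|) = ∑ i, W.mulVec m i := by
    exact Finset.sum_congr rfl fun i _ => abs_of_nonneg (hm i)
  have hB : (∑ i, |W.mulVec (m + c) i|) = ∑ i, (W.mulVec m i + W.mulVec c i) := by
    refine Finset.sum_congr rfl fun i _ => ?_
    rw [mulVec_add, Pi.add_apply]
    exact abs_of_nonneg (add_nonneg (hm i) (hWc i))
  have hAB : (∑ i, |W.mulVec m i|) ≤ ∑ i, |W.mulVec (m + c) i| := by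
    rw [hA, hB]
    exact Finset.sum_le_sum fun i _ => le_add_of_nonneg_right (hWc i)
  have hApos : 0 < ∑ i, |W.mulVec m i| := hA ▸ hmpos
  have hI : 0 ≤ ∫ p : (n → ℝ) × (n → ℝ), ∑ i, |W.mulVec (p.1 - p.2) i| ∂(μ.prod μ) :=
    integral_nonneg fun p => Finset.sum_nonneg fun i _ => abs_nonneg _
  unfold giniL1
  rw [hmean, hInt]
  apply mul_le_mul_of_nonneg_right _ hI
  apply one_div_le_one_div_of_le (by linarith)
  linarith
end
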